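/- arXiv:2405.12317 — 4 statements merged into one kernel-verified Lean document; each statement's English description precedes it below -/
import Mathlib

section
/- Let A and Â be compact self-adjoint operators on a Hilbert space H with nonincreasing eigenvalues {λ_i}, {λ̂_i}. Fix a nonzero eigenvalue λ_i of A with eigenvalue-index set I = {t : λ_t = λ_i}, and let δ_i = min_{j ∉ I} |λ_i − λ_j|. Let P_I and P̂_I be the orthogonal projections onto the span of eigenvectors of A and Â with indices in I. If δ_i ≥ ℓ > 0 and ‖A − Â‖ < ℓ/4, then ‖P_I − P̂_I‖ ≤ (8/ℓ) · ‖A − Â‖. -/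
/-!
Put `D = A - lam` and `D' = A' - lam`. The projection `P` commutes with `D` and `D P = 0`, while
`Q` commutes with `D'` and `‖D' Q‖ ≤ ℓ/2`. By the spectral theorem for compact self-adjoint
operators, `(range P)ᗮ` and `(range Q)ᗮ` are closed spans of eigenvectors whose eigenvalues lie at
distance `≥ ℓ`, resp. `≥ ℓ/2`, from `lam`; so `‖D y‖ ≥ ℓ‖y‖` and `‖D' y‖ ≥ (ℓ/2)‖y‖` there.

For `X = (1 - Q) P` the identity `D' X = (1 - Q)(D' - D) P + X (D P)` gives
`c‖X‖ ≤ ‖D - D'‖ + r‖X‖`, where `c` bounds `D'` from below on `(range Q)ᗮ` and `r` bounds `D` on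
`range P`. Hence `‖(1 - Q) P‖ ≤ 2‖A - A'‖/ℓ`, and with the roles exchanged
`‖(1 - P) Q‖ ≤ 2‖A - A'‖/ℓ`. Finally `P - Q = (1 - Q) P - ((1 - P) Q)⋆`.
-/

open Module End Submodule

section

variable {𝕜 E : Type*} [RCLike 𝕜] [NormedAddCommGroup E] [InnerProductSpace 𝕜 E]

theorem IsSelfAdjoint.norm_sub_le_norm_one_sub_mul_add {R : Type*} [NormedRing R] [StarRing R]
    [NormedStarGroup R] {p q : R} (hp : IsSelfAdjoint p) (hq : IsSelfAdjoint q) :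
    ‖p - q‖ ≤ ‖(1 - q) * p‖ + ‖(1 - p) * q‖ := by
  have : p - q = (1 - q) * p - star ((1 - p) * q) := by
    rw [star_mul, star_sub, star_one, hp.star_eq, hq.star_eq]
    noncomm_ring
  rw [this]
  exact (norm_sub_le _ _).trans_eq (by rw [norm_star])

theorem Module.End.iSup_eigenspace_mem_invtSubmodule {R M : Type*} [CommRing R] [AddCommGroup M]
    [Module R M] (f : End R M) (S : Set R) :
    (⨆ μ ∈ S, f.eigenspace μ) ∈ f.invtSubmodule :=
  iSup₂_le fun μ hμ ↦ (f.eigenspace_mem_invtSubmodule μ).trans (comap_mono (le_iSup₂ μ hμ))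

namespace LinearMap.IsSymmetric

variable {T : E →ₗ[𝕜] E} {S : Set 𝕜} {lam : 𝕜} {c : ℝ} {x : E}

theorem exists_spectral_weights (hT : T.IsSymmetric) (hx : x ∈ ⨆ μ ∈ S, eigenspace T μ) :
    ∃ (s : Finset 𝕜) (w : 𝕜 → ℝ), (∀ μ ∈ s, μ ∈ S ∧ HasEigenvalue T μ) ∧ (∀ μ, 0 ≤ w μ) ∧
      ‖x‖ ^ 2 = ∑ μ ∈ s, w μ ∧
      ∀ ν : 𝕜, ‖T x - ν • x‖ ^ 2 = ∑ μ ∈ s, ‖μ - ν‖ ^ 2 * w μ := by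
  obtain ⟨v, hv, rfl⟩ := (mem_iSup_iff_exists_finsupp _ _).mp hx
  have hvS : ∀ μ, v μ ≠ 0 → μ ∈ S := fun μ hμ ↦ by
    by_contra h
    exact hμ (by simpa [h] using hv μ)
  have hvT : ∀ μ, v μ ∈ eigenspace T μ := fun μ ↦ by
    by_cases h : μ ∈ S
    · simpa [h] using hv μ
    · simp [not_not.mp (mt (hvS μ) h)]
  have hsum : ∀ a : 𝕜 → 𝕜, ‖∑ μ ∈ v.support, a μ • v μ‖ ^ 2 =
      ∑ μ ∈ v.support, ‖a μ‖ ^ 2 * ‖v μ‖ ^ 2 := fun a ↦ by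
    simpa [norm_smul, mul_pow] using hT.orthogonalFamily_eigenspaces.norm_sum
      (fun μ ↦ ⟨a μ • v μ, smul_mem _ _ (hvT μ)⟩) v.support
  refine ⟨v.support, fun μ ↦ ‖v μ‖ ^ 2, fun μ hμ ↦ ?_, fun μ ↦ by positivity, ?_, fun ν ↦ ?_⟩
  · have hne := Finsupp.mem_support_iff.mp hμ
    exact ⟨hvS μ hne, hasEigenvalue_of_hasEigenvector ⟨hvT μ, hne⟩⟩
  · simpa [Finsupp.sum] using hsum 1
  · have : T (v.sum fun _ y ↦ y) - ν • v.sum (fun _ y ↦ y) =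
        ∑ μ ∈ v.support, (μ - ν) • v μ := by
      simp only [Finsupp.sum, map_sum, Finset.smul_sum, ← Finset.sum_sub_distrib, sub_smul,
        mem_eigenspace_iff.mp (hvT _)]
    rw [this, hsum]

theorem norm_apply_sub_smul_le_of_mem_iSup_eigenspace (hT : T.IsSymmetric)
    (hx : x ∈ ⨆ μ ∈ S, eigenspace T μ) (hc : 0 ≤ c) (hS : ∀ μ ∈ S, ‖μ - lam‖ ≤ c) :
    ‖T x - lam • x‖ ≤ c * ‖x‖ := by
  obtain ⟨s, w, hs, hw, hx, hTx⟩ := hT.exists_spectral_weights hx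
  refine le_of_sq_le_sq ?_ (by positivity)
  rw [mul_pow, hTx, hx, Finset.mul_sum]
  gcongr with μ hμ
  · exact hw μ
  · exact hS μ (hs μ hμ).1

theorem le_norm_apply_sub_smul_of_mem_iSup_eigenspace (hT : T.IsSymmetric)
    (hx : x ∈ ⨆ μ ∈ S, eigenspace T μ) (hc : 0 ≤ c)
    (hS : ∀ μ ∈ S, HasEigenvalue T μ → c ≤ ‖μ - lam‖) :
    c * ‖x‖ ≤ ‖T x - lam • x‖ := by
  obtain ⟨s, w, hs, hw, hx, hTx⟩ := hT.exists_spectral_weights hx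
  refine le_of_sq_le_sq ?_ (norm_nonneg _)
  rw [mul_pow, hTx, hx, Finset.mul_sum]
  gcongr with μ hμ
  · exact hw μ
  · exact hS μ (hs μ hμ).1 (hs μ hμ).2

theorem iSup_eigenspace_isOrtho_compl (hT : T.IsSymmetric) (S : Set 𝕜) :
    (⨆ μ ∈ S, eigenspace T μ) ⟂ (⨆ μ ∈ Sᶜ, eigenspace T μ) := by
  simp only [isOrtho_iSup_left, isOrtho_iSup_right]
  intro ν hν μ hμ
  exact hT.orthogonalFamily_eigenspaces.isOrtho (ne_of_mem_of_not_mem hμ hν)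

end LinearMap.IsSymmetric

namespace ContinuousLinearMap

variable {T : E →L[𝕜] E} {S : Set 𝕜} {lam : 𝕜} {c : ℝ} {x : E}

theorem le_norm_apply_sub_smul_of_mem_closure_iSup_eigenspace (hT : T.IsSymmetric)
    (hx : x ∈ (⨆ μ ∈ S, eigenspace (T : End 𝕜 E) μ).topologicalClosure) (hc : 0 ≤ c)
    (hS : ∀ μ ∈ S, HasEigenvalue (T : End 𝕜 E) μ → c ≤ ‖μ - lam‖) :
    c * ‖x‖ ≤ ‖T x - lam • x‖ := by
  rw [← SetLike.mem_coe, topologicalClosure_coe] at hx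
  have hclosed : IsClosed {y : E | c * ‖y‖ ≤ ‖T y - lam • y‖} :=
    isClosed_le (by fun_prop) (by fun_prop)
  exact closure_minimal (fun y hy ↦ hT.le_norm_apply_sub_smul_of_mem_iSup_eigenspace hy hc hS)
    hclosed hx

variable [CompleteSpace E]

theorem orthogonal_iSup_eigenspace_le_closure (hT : IsCompactOperator T) (hT' : T.IsSymmetric)
    (S : Set 𝕜) :
    (⨆ μ ∈ S, eigenspace (T : End 𝕜 E) μ)ᗮ ≤
      (⨆ μ ∈ Sᶜ, eigenspace (T : End 𝕜 E) μ).topologicalClosure := by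
  set U := ⨆ μ ∈ S, eigenspace (T : End 𝕜 E) μ
  set V := ⨆ μ ∈ Sᶜ, eigenspace (T : End 𝕜 E) μ
  have : CompleteSpace V.topologicalClosure := V.isClosed_topologicalClosure.completeSpace_coe
  have hVU : V.topologicalClosure ≤ Uᗮ := topologicalClosure_minimal _
    (isOrtho_iff_le.mp (hT'.iSup_eigenspace_isOrtho_compl S).symm) (isClosed_orthogonal U)
  have hbot : V.topologicalClosureᗮ ⊓ Uᗮ = ⊥ := by
    refine eq_bot_iff.mpr ((inf_le_inf_right _ (orthogonal_le V.le_topologicalClosure)).trans ?_)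
    rw [inf_orthogonal, sup_comm, show U ⊔ V = ⨆ μ, eigenspace (T : End 𝕜 E) μ from
      (iSup_split _ (· ∈ S)).symm, orthogonalComplement_iSup_eigenspaces_eq_bot hT hT']
  rw [← sup_orthogonal_inf_of_hasOrthogonalProjection hVU, hbot, sup_bot_eq]

theorem le_norm_apply_sub_smul_of_mem_orthogonal (hT : IsCompactOperator T) (hT' : T.IsSymmetric)
    (hx : x ∈ (⨆ μ ∈ S, eigenspace (T : End 𝕜 E) μ)ᗮ) (hc : 0 ≤ c)
    (hS : ∀ μ ∉ S, HasEigenvalue (T : End 𝕜 E) μ → c ≤ ‖μ - lam‖) :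
    c * ‖x‖ ≤ ‖T x - lam • x‖ :=
  le_norm_apply_sub_smul_of_mem_closure_iSup_eigenspace hT'
    (orthogonal_iSup_eigenspace_le_closure hT hT' S hx) hc hS

end ContinuousLinearMap

namespace IsStarProjection

variable [CompleteSpace E]

theorem commute_of_range_mem_invtSubmodule {P T : E →L[𝕜] E}
    (hP : IsStarProjection P) (hT : IsSelfAdjoint T)
    (h : LinearMap.range (P : E →ₗ[𝕜] E) ∈ invtSubmodule (T : E →ₗ[𝕜] E)) : Commute P T := by
  have hPTP : P * T * P = T * P :=
    ContinuousLinearMap.IsIdempotentElem.conj_eq_of_range_mem_invtSubmodule hP.isIdempotentElem h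
  calc P * T = star (P * T * P) := by
        rw [hPTP, star_mul, hP.isSelfAdjoint.star_eq, hT.star_eq]
    _ = T * P := by
        rw [star_mul, star_mul, hP.isSelfAdjoint.star_eq, hT.star_eq, ← mul_assoc, hPTP]

theorem norm_one_sub_mul_le_of_separated {P Q D D' : E →L[𝕜] E}
    (hP : IsStarProjection P) (hQ : IsStarProjection Q) (hPD : Commute P D) (hQD' : Commute Q D')
    {c r : ℝ} (hrc : r < c) (hr : ‖D * P‖ ≤ r)
    (hc : ∀ y ∈ (LinearMap.range (Q : E →ₗ[𝕜] E))ᗮ, c * ‖y‖ ≤ ‖D' y‖) :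
    ‖(1 - Q) * P‖ ≤ ‖D - D'‖ / (c - r) := by
  have hX : D' * ((1 - Q) * P) = (1 - Q) * (D' - D) * P + (1 - Q) * P * (D * P) := by
    have h : D' * ((1 - Q) * P) - ((1 - Q) * (D' - D) * P + (1 - Q) * P * (D * P)) =
        (Q * D' - D' * Q) * P + (1 - Q) * (D * P - P * D * P) := by
      noncomm_ring
    rwa [hQD'.eq, hPD.eq, mul_assoc D, hP.isIdempotentElem.eq, sub_self, sub_self, zero_mul,
      mul_zero, add_zero, sub_eq_zero] at h
  set X := (1 - Q) * P
  have hXQ : ∀ x, X x ∈ (LinearMap.range (Q : E →ₗ[𝕜] E))ᗮ := fun x ↦ by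
    rw [hQ.isSelfAdjoint.isSymmetric.orthogonal_range, LinearMap.mem_ker]
    change (Q * X) x = 0
    rw [← mul_assoc, mul_sub, mul_one, hQ.isIdempotentElem.eq, sub_self, zero_mul]
    rfl
  have hDD' : ‖(1 - Q) * (D' - D) * P‖ ≤ ‖D - D'‖ := calc
    _ ≤ ‖1 - Q‖ * ‖D' - D‖ * ‖P‖ := norm_mul₃_le
    _ ≤ 1 * ‖D' - D‖ * 1 := by
      gcongr
      · exact hQ.one_sub.norm_le
      · exact hP.norm_le
    _ = ‖D - D'‖ := by rw [one_mul, mul_one, norm_sub_rev]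
  have hr0 : 0 ≤ r := (norm_nonneg _).trans hr
  have hbound : ∀ x, c * ‖X x‖ ≤ (‖D - D'‖ + r * ‖X‖) * ‖x‖ := fun x ↦ calc
    c * ‖X x‖ ≤ ‖(D' * X) x‖ := hc _ (hXQ x)
    _ ≤ ‖((1 - Q) * (D' - D) * P) x‖ + ‖X ((D * P) x)‖ := by
      rw [hX]; exact norm_add_le _ _
    _ ≤ ‖D - D'‖ * ‖x‖ + ‖X‖ * (r * ‖x‖) := by
      gcongr
      · exact ((1 - Q) * (D' - D) * P).le_of_opNorm_le hDD' x
      · exact X.le_opNorm_of_le ((D * P).le_of_opNorm_le hr x)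
    _ = (‖D - D'‖ + r * ‖X‖) * ‖x‖ := by ring
  have hc0 : 0 < c := hr0.trans_lt hrc
  have hXle : c * ‖X‖ ≤ ‖D - D'‖ + r * ‖X‖ := by
    rw [← le_div_iff₀' hc0]
    exact X.opNorm_le_bound (by positivity) fun x ↦ by
      rw [div_mul_eq_mul_div, le_div_iff₀' hc0]; exact hbound x
  rw [le_div_iff₀ (sub_pos.mpr hrc)]
  linarith

variable {P Q T T' : E →L[𝕜] E} {S S' : Set 𝕜} {lam : 𝕜}

theorem commute_sub_smul_one_of_range_eq_iSup_eigenspace (hP : IsStarProjection P)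
    (hT : IsSelfAdjoint T)
    (hPT : LinearMap.range (P : E →ₗ[𝕜] E) = ⨆ μ ∈ S, eigenspace (T : End 𝕜 E) μ) :
    Commute P (T - lam • 1) :=
  (hP.commute_of_range_mem_invtSubmodule hT (hPT ▸ iSup_eigenspace_mem_invtSubmodule _ S)
    ).sub_right ((Commute.one_right P).smul_right lam)

theorem norm_sub_smul_one_mul_le_of_range_eq_iSup_eigenspace (hP : IsStarProjection P)
    (hT : IsSelfAdjoint T)
    (hPT : LinearMap.range (P : E →ₗ[𝕜] E) = ⨆ μ ∈ S, eigenspace (T : End 𝕜 E) μ) {r : ℝ}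
    (hr : 0 ≤ r) (hS : ∀ μ ∈ S, ‖μ - lam‖ ≤ r) :
    ‖(T - lam • 1) * P‖ ≤ r :=
  ContinuousLinearMap.opNorm_le_bound _ hr fun x ↦ calc
    ‖T (P x) - lam • P x‖ ≤ r * ‖P x‖ :=
      hT.isSymmetric.norm_apply_sub_smul_le_of_mem_iSup_eigenspace
        (hPT ▸ LinearMap.mem_range_self _ x) hr hS
    _ ≤ r * ‖x‖ := by gcongr; exact (P.le_of_opNorm_le hP.norm_le x).trans_eq (one_mul _)

theorem norm_one_sub_mul_le_of_spectral_separation (hP : IsStarProjection P)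
    (hQ : IsStarProjection Q) (hT : IsSelfAdjoint T) (hT' : IsSelfAdjoint T')
    (hT'c : IsCompactOperator T')
    (hPT : LinearMap.range (P : E →ₗ[𝕜] E) = ⨆ μ ∈ S, eigenspace (T : End 𝕜 E) μ)
    (hQT' : LinearMap.range (Q : E →ₗ[𝕜] E) = ⨆ μ ∈ S', eigenspace (T' : End 𝕜 E) μ)
    {c r : ℝ} (hr : 0 ≤ r) (hrc : r < c) (hS : ∀ μ ∈ S, ‖μ - lam‖ ≤ r)
    (hS' : ∀ μ ∉ S', HasEigenvalue (T' : End 𝕜 E) μ → c ≤ ‖μ - lam‖) :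
    ‖(1 - Q) * P‖ ≤ ‖T - T'‖ / (c - r) := by
  have hc : ∀ y ∈ (LinearMap.range (Q : E →ₗ[𝕜] E))ᗮ, c * ‖y‖ ≤ ‖(T' - lam • 1) y‖ := by
    intro y hy
    rw [hQT'] at hy
    simpa using ContinuousLinearMap.le_norm_apply_sub_smul_of_mem_orthogonal hT'c
      hT'.isSymmetric hy (hr.trans hrc.le) hS'
  simpa using hP.norm_one_sub_mul_le_of_separated hQ
    (hP.commute_sub_smul_one_of_range_eq_iSup_eigenspace hT hPT)
    (hQ.commute_sub_smul_one_of_range_eq_iSup_eigenspace hT' hQT') hrc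
    (hP.norm_sub_smul_one_mul_le_of_range_eq_iSup_eigenspace hT hPT hr hS) hc

end IsStarProjection

end

theorem spectral_projection_perturbation_general
    {H : Type*} [NormedAddCommGroup H] [InnerProductSpace ℂ H] [CompleteSpace H]
    (A A' : H →L[ℂ] H)
    (hAsa : IsSelfAdjoint A) (hA'sa : IsSelfAdjoint A')
    (hAc : IsCompactOperator A) (hA'c : IsCompactOperator A')
    (lam : ℂ)
    (ℓ : ℝ) (hℓ : 0 < ℓ)
    (hgap : ∀ μ : ℂ, Module.End.HasEigenvalue (A : H →ₗ[ℂ] H) μ → μ ≠ lam → ℓ ≤ ‖lam - μ‖)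
    (P Q : H →L[ℂ] H)
    (hPidem : IsIdempotentElem P) (hPsa : IsSelfAdjoint P)
    (hQidem : IsIdempotentElem Q) (hQsa : IsSelfAdjoint Q)
    (hPrange : LinearMap.range (P : H →ₗ[ℂ] H) =
      Module.End.eigenspace (A : H →ₗ[ℂ] H) lam)
    (hQrange : LinearMap.range (Q : H →ₗ[ℂ] H) =
      ⨆ μ ∈ {μ : ℂ | ‖μ - lam‖ < ℓ / 2}, Module.End.eigenspace (A' : H →ₗ[ℂ] H) μ) :
    ‖P - Q‖ ≤ (8 / ℓ) * ‖A - A'‖ := by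
  have hPrange' : LinearMap.range (P : H →ₗ[ℂ] H) =
      ⨆ μ ∈ ({lam} : Set ℂ), Module.End.eigenspace (A : H →ₗ[ℂ] H) μ := by
    rw [hPrange, iSup_singleton]
  have hPQ := IsStarProjection.norm_one_sub_mul_le_of_spectral_separation ⟨hPidem, hPsa⟩
    ⟨hQidem, hQsa⟩ hAsa hA'sa hA'c hPrange' hQrange le_rfl (half_pos hℓ)
    (by simp) fun μ hμ _ ↦ not_lt.mp hμ
  have hQP := IsStarProjection.norm_one_sub_mul_le_of_spectral_separation ⟨hQidem, hQsa⟩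
    ⟨hPidem, hPsa⟩ hA'sa hAsa hAc hQrange hPrange' (half_pos hℓ).le (half_lt_self hℓ)
    (fun μ hμ ↦ le_of_lt hμ) fun μ hμ hev ↦ norm_sub_rev lam μ ▸ hgap μ hev hμ
  calc ‖P - Q‖ ≤ ‖(1 - Q) * P‖ + ‖(1 - P) * Q‖ := hPsa.norm_sub_le_norm_one_sub_mul_add hQsa
    _ ≤ ‖A - A'‖ / (ℓ / 2 - 0) + ‖A' - A‖ / (ℓ - ℓ / 2) := add_le_add hPQ hQP
    _ = 4 / ℓ * ‖A - A'‖ := by rw [norm_sub_rev A']; field_simp [hℓ.ne']; ring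
    _ ≤ 8 / ℓ * ‖A - A'‖ := by gcongr; norm_num

/-- Perturbation bound for spectral projections of compact self-adjoint operators
(Lemma on eigenspace projections). `A` and `A'` are compact self-adjoint operators on a
complex Hilbert space, `lam ≠ 0` is an eigenvalue of `A` whose distance to every other
eigenvalue is at least `ℓ` (the eigenvalue gap `δ_i ≥ ℓ`), and `‖A − A'‖ < ℓ/4`. `P` is the
orthogonal projection onto the `lam`-eigenspace of `A` (the span of the eigenvectors with
indices in `I`), and `Q` is the orthogonal projection onto the span of the eigenspaces of
`A'` for eigenvalues within distance `ℓ/2` of `lam` (the eigenvectors of `A'` with indices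
in `I`). Then `‖P − Q‖ ≤ (8/ℓ)‖A − A'‖`. -/
theorem spectral_projection_perturbation
    {H : Type*} [NormedAddCommGroup H] [InnerProductSpace ℂ H] [CompleteSpace H]
    (A A' : H →L[ℂ] H)
    (hAsa : IsSelfAdjoint A) (hA'sa : IsSelfAdjoint A')
    (hAc : IsCompactOperator A) (hA'c : IsCompactOperator A')
    (lam : ℂ) (hlam0 : lam ≠ 0)
    (hlam : Module.End.HasEigenvalue (A : H →ₗ[ℂ] H) lam)
    (ℓ : ℝ) (hℓ : 0 < ℓ)
    (hgap : ∀ μ : ℂ, Module.End.HasEigenvalue (A : H →ₗ[ℂ] H) μ → μ ≠ lam → ℓ ≤ ‖lam - μ‖)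
    (hclose : ‖A - A'‖ < ℓ / 4)
    (P Q : H →L[ℂ] H)
    (hPidem : IsIdempotentElem P) (hPsa : IsSelfAdjoint P)
    (hQidem : IsIdempotentElem Q) (hQsa : IsSelfAdjoint Q)
    (hPrange : LinearMap.range (P : H →ₗ[ℂ] H) =
      Module.End.eigenspace (A : H →ₗ[ℂ] H) lam)
    (hQrange : LinearMap.range (Q : H →ₗ[ℂ] H) =
      ⨆ μ ∈ {μ : ℂ | ‖μ - lam‖ < ℓ / 2}, Module.End.eigenspace (A' : H →ₗ[ℂ] H) μ) :
    ‖P - Q‖ ≤ (8 / ℓ) * ‖A - A'‖ :=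
  spectral_projection_perturbation_general A A' hAsa hA'sa hAc hA'c lam ℓ hℓ hgap P Q hPidem hPsa
    hQidem hQsa hPrange hQrange
end

section
/- Let x₁, ..., x_n be independent mean-zero real random variables with |x_i| ≤ K almost surely. Then for every t ≥ 0, P(|∑_{i=1}^n x_i| ≥ t) ≤ 2·exp(−(t²/2)/(∑_{i=1}^n E[x_i²] + Kt/3)). -/
/-!
Since `(p + 2)! ≥ 2 · 3 ^ p`, the tail of the exponential series is dominated by a geometric
series: `exp y ≤ 1 + y + y² / (2 (1 - |y| / 3))` for `|y| < 3`. Integrating this against a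
centred variable bounded by `K` gives `E[exp (c X)] ≤ exp (E[X²] · c² / (2 (1 - c K / 3)))` for
`0 ≤ c < 3 / K`. Independence multiplies these bounds, and the Chernoff bound with
`c = t / (V + K t / 3)`, where `V = ∑ E[Xᵢ²]`, yields the upper tail; the lower tail follows
by applying it to `-X`.
-/

open MeasureTheory ProbabilityTheory Real

lemma exp_le_one_add_add_sq_div {y : ℝ} (hy : |y| < 3) :
    exp y ≤ 1 + y + y ^ 2 / (2 * (1 - |y| / 3)) := by
  set r := |y| / 3
  have hr : 0 ≤ r := by positivity
  have hr1 : r < 1 := by simp only [r]; linarith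
  have hsum := summable_pow_div_factorial y
  have hsplit : exp y = 1 + y + ∑' p : ℕ, y ^ (p + 2) / (p + 2).factorial := by
    rw [exp_eq_exp_ℝ, NormedSpace.exp_eq_tsum_div]
    beta_reduce
    rw [← hsum.sum_add_tsum_nat_add 2]
    norm_num [Finset.sum_range_succ]
  have hterm (p : ℕ) : y ^ (p + 2) / (p + 2).factorial ≤ y ^ 2 / 2 * r ^ p := by
    have hfac : (2 * 3 ^ p : ℝ) ≤ (p + 2).factorial := by
      exact_mod_cast (by simpa [add_comm, Nat.factorial] using
        Nat.factorial_mul_pow_le_factorial (m := 2) (n := p))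
    calc y ^ (p + 2) / (p + 2).factorial ≤ |y| ^ (p + 2) / (2 * 3 ^ p) := by
          gcongr ?_ / ?_
          exact (le_abs_self _).trans (abs_pow y _).le
      _ = y ^ 2 / 2 * r ^ p := by simp only [r]; rw [pow_add, sq_abs, div_pow]; field_simp
  calc exp y = 1 + y + ∑' p : ℕ, y ^ (p + 2) / (p + 2).factorial := hsplit
    _ ≤ 1 + y + ∑' p : ℕ, y ^ 2 / 2 * r ^ p :=
        add_le_add_right (((summable_nat_add_iff 2).2 hsum).tsum_le_tsum hterm
          ((summable_geometric_of_lt_one hr hr1).mul_left _)) _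
    _ = 1 + y + y ^ 2 / (2 * (1 - r)) := by
        rw [tsum_mul_left, tsum_geometric_of_lt_one hr hr1]; field_simp

lemma exp_mul_le_of_abs_le {c x K : ℝ} (hc : 0 ≤ c) (hcK : c * K < 3) (hx : |x| ≤ K) :
    exp (c * x) ≤ 1 + c * x + x ^ 2 * (c ^ 2 / (2 * (1 - c * K / 3))) := by
  have hcx : |c * x| ≤ c * K := by rw [abs_mul, abs_of_nonneg hc]; gcongr
  calc exp (c * x) ≤ 1 + c * x + (c * x) ^ 2 / (2 * (1 - |c * x| / 3)) :=
        exp_le_one_add_add_sq_div (hcx.trans_lt hcK)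
    _ ≤ 1 + c * x + (c * x) ^ 2 / (2 * (1 - c * K / 3)) := by
        gcongr
        linarith
    _ = 1 + c * x + x ^ 2 * (c ^ 2 / (2 * (1 - c * K / 3))) := by ring

section Bernstein

variable {Ω : Type*} [MeasurableSpace Ω] {μ : Measure Ω}

lemma integrable_sq_of_abs_le [IsFiniteMeasure μ] {Y : Ω → ℝ} {K : ℝ} (hY : AEMeasurable Y μ)
    (hb : ∀ᵐ ω ∂μ, |Y ω| ≤ K) : Integrable (fun ω => Y ω ^ 2) μ := by
  refine .of_bound (hY.pow_const 2).aestronglyMeasurable (K ^ 2) ?_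
  filter_upwards [hb] with ω h
  rw [Real.norm_eq_abs, abs_pow]
  exact pow_le_pow_left₀ (abs_nonneg _) h 2

lemma integrable_exp_mul_of_abs_le [IsFiniteMeasure μ] {Y : Ω → ℝ} {K c : ℝ}
    (hY : AEMeasurable Y μ) (hb : ∀ᵐ ω ∂μ, |Y ω| ≤ K) (hc : 0 ≤ c) :
    Integrable (fun ω => exp (c * Y ω)) μ := by
  refine .of_bound (hY.const_mul c).exp.aestronglyMeasurable (exp (c * K)) ?_
  filter_upwards [hb] with ω h
  rw [Real.norm_of_nonneg (exp_pos _).le, exp_le_exp]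
  exact mul_le_mul_of_nonneg_left ((le_abs_self _).trans h) hc

variable [IsProbabilityMeasure μ]

lemma mgf_le_exp_integral_sq_mul {Y : Ω → ℝ} {K c : ℝ} (hY : AEMeasurable Y μ)
    (hmean : ∫ ω, Y ω ∂μ = 0) (hb : ∀ᵐ ω ∂μ, |Y ω| ≤ K) (hc : 0 ≤ c) (hcK : c * K < 3) :
    mgf Y μ c ≤ exp ((∫ ω, Y ω ^ 2 ∂μ) * (c ^ 2 / (2 * (1 - c * K / 3)))) := by
  set a := c ^ 2 / (2 * (1 - c * K / 3))
  have hint : Integrable Y μ := by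
    refine .of_bound hY.aestronglyMeasurable K ?_
    simpa only [Real.norm_eq_abs] using hb
  have hint_sq := integrable_sq_of_abs_le hY hb
  have hint_lin : Integrable (fun ω => 1 + c * Y ω) μ :=
    (integrable_const 1).add (hint.const_mul c)
  calc mgf Y μ c = ∫ ω, exp (c * Y ω) ∂μ := rfl
    _ ≤ ∫ ω, (1 + c * Y ω + Y ω ^ 2 * a) ∂μ := by
        refine integral_mono_ae (integrable_exp_mul_of_abs_le hY hb hc)
          (hint_lin.add (hint_sq.mul_const a)) ?_
        filter_upwards [hb] with ω h
        exact exp_mul_le_of_abs_le hc hcK h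
    _ = 1 + (∫ ω, Y ω ^ 2 ∂μ) * a := by
        rw [integral_add hint_lin (hint_sq.mul_const a),
          integral_add (integrable_const 1) (hint.const_mul c), integral_const,
          integral_const_mul, integral_mul_const, hmean]
        simp
    _ ≤ exp ((∫ ω, Y ω ^ 2 ∂μ) * a) := by linarith [add_one_le_exp ((∫ ω, Y ω ^ 2 ∂μ) * a)]

variable {ι : Type*} [Fintype ι] {X : ι → Ω → ℝ} {K t : ℝ}

lemma bernstein_upper_tail (hindep : iIndepFun X μ) (hmeas : ∀ i, Measurable (X i))
    (hmean : ∀ i, ∫ ω, X i ω ∂μ = 0) (hbdd : ∀ i, ∀ᵐ ω ∂μ, |X i ω| ≤ K) (hK : 0 ≤ K)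
    (ht : 0 < t) (hV : 0 < ∑ i, ∫ ω, X i ω ^ 2 ∂μ) :
    μ.real {ω | t ≤ ∑ i, X i ω} ≤
      exp (-(t ^ 2 / 2) / ((∑ i, ∫ ω, X i ω ^ 2 ∂μ) + K * t / 3)) := by
  set V := ∑ i, ∫ ω, X i ω ^ 2 ∂μ
  set c := t / (V + K * t / 3)
  have hD : 0 < V + K * t / 3 := by positivity
  have hc : 0 ≤ c := by positivity
  have hcK : c * K < 3 := by
    rw [div_mul_eq_mul_div, div_lt_iff₀ hD]
    nlinarith
  have hmgf : mgf (∑ i, X i) μ c ≤ exp (V * (c ^ 2 / (2 * (1 - c * K / 3)))) := by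
    rw [hindep.mgf_sum hmeas, Finset.sum_mul, exp_sum]
    exact Finset.prod_le_prod (fun i _ => mgf_nonneg) fun i _ =>
      mgf_le_exp_integral_sq_mul (hmeas i).aemeasurable (hmean i) (hbdd i) hc hcK
  have hset : {ω | t ≤ ∑ i, X i ω} = {ω | t ≤ (∑ i, X i) ω} := by simp [Finset.sum_apply]
  calc μ.real {ω | t ≤ ∑ i, X i ω}
      ≤ exp (-c * t) * mgf (∑ i, X i) μ c :=
        hset ▸ measure_ge_le_exp_mul_mgf t hc (hindep.integrable_exp_mul_sum hmeas fun i _ =>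
          integrable_exp_mul_of_abs_le (hmeas i).aemeasurable (hbdd i) hc)
    _ ≤ exp (-c * t) * exp (V * (c ^ 2 / (2 * (1 - c * K / 3)))) := by gcongr
    _ = exp (-(t ^ 2 / 2) / (V + K * t / 3)) := by
        rw [← exp_add]
        congr 1
        simp only [c]
        field_simp
        ring

lemma bernstein_lower_tail (hindep : iIndepFun X μ) (hmeas : ∀ i, Measurable (X i))
    (hmean : ∀ i, ∫ ω, X i ω ∂μ = 0) (hbdd : ∀ i, ∀ᵐ ω ∂μ, |X i ω| ≤ K) (hK : 0 ≤ K)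
    (ht : 0 < t) (hV : 0 < ∑ i, ∫ ω, X i ω ^ 2 ∂μ) :
    μ.real {ω | t ≤ -∑ i, X i ω} ≤
      exp (-(t ^ 2 / 2) / ((∑ i, ∫ ω, X i ω ^ 2 ∂μ) + K * t / 3)) := by
  have h := bernstein_upper_tail (X := fun i ω => -X i ω)
    (hindep.comp (fun _ x => -x) fun _ => measurable_neg) (fun i => (hmeas i).neg)
    (by simpa [integral_neg] using hmean) (by simpa using hbdd) hK ht (by simpa using hV)
  simpa [Finset.sum_neg_distrib] using h

lemma measureReal_le_abs_sum_eq_zero (hint : ∀ i, Integrable (fun ω => X i ω ^ 2) μ)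
    (ht : 0 < t) (hV : ∑ i, ∫ ω, X i ω ^ 2 ∂μ = 0) :
    μ.real {ω | t ≤ |∑ i, X i ω|} = 0 := by
  have hzero (i : ι) : ∀ᵐ ω ∂μ, X i ω = 0 := by
    have hi := (Finset.sum_eq_zero_iff_of_nonneg fun j _ =>
      integral_nonneg fun ω => sq_nonneg (X j ω)).1 hV i (Finset.mem_univ i)
    filter_upwards [(integral_eq_zero_iff_of_nonneg (fun ω => sq_nonneg (X i ω)) (hint i)).1 hi]
      with ω h using pow_eq_zero_iff two_ne_zero |>.1 h
  rw [measureReal_eq_zero_iff]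
  refine measure_mono_null ?_ (ae_iff.1 (ae_all_iff.2 hzero))
  intro ω (hω : t ≤ |∑ i, X i ω|) h0
  simp only [h0, Finset.sum_const_zero, abs_zero] at hω
  linarith

end Bernstein

/-- Bernstein's inequality: for independent mean-zero real random variables `X₁,…,Xₙ` with
`|Xᵢ| ≤ K` almost surely, for every `t ≥ 0`,
`P(|∑ Xᵢ| ≥ t) ≤ 2 exp(−(t²/2)/(∑ E[Xᵢ²] + K t/3))`. -/
theorem bernstein_inequality
    {Ω : Type*} [MeasurableSpace Ω] (μ : Measure Ω) [IsProbabilityMeasure μ]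
    (n : ℕ) (X : Fin n → Ω → ℝ) (K : ℝ) (hK : 0 < K)
    (hindep : iIndepFun X μ)
    (hmeas : ∀ i, Measurable (X i))
    (hmean : ∀ i, ∫ ω, X i ω ∂μ = 0)
    (hbdd : ∀ i, ∀ᵐ ω ∂μ, |X i ω| ≤ K)
    (t : ℝ) (ht : 0 ≤ t) :
    μ {ω | t ≤ |∑ i, X i ω|} ≤
      ENNReal.ofReal
        (2 * Real.exp (-(t ^ 2 / 2) / ((∑ i, ∫ ω, (X i ω) ^ 2 ∂μ) + K * t / 3))) := by
  rw [ENNReal.le_ofReal_iff_toReal_le (measure_ne_top _ _) (by positivity), ← measureReal_def]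
  obtain rfl | ht := ht.eq_or_lt
  · norm_num
  have hV : 0 ≤ ∑ i, ∫ ω, X i ω ^ 2 ∂μ :=
    Finset.sum_nonneg fun i _ => integral_nonneg fun ω => sq_nonneg _
  obtain hV | hV := hV.eq_or_lt
  -- for `V = 0` the Chernoff parameter would give `c K = 3`, but then every `Xᵢ` vanishes a.e.
  · rw [measureReal_le_abs_sum_eq_zero
      (fun i => integrable_sq_of_abs_le (hmeas i).aemeasurable (hbdd i)) ht hV.symm]
    positivity
  calc μ.real {ω | t ≤ |∑ i, X i ω|}
      ≤ μ.real ({ω | t ≤ ∑ i, X i ω} ∪ {ω | t ≤ -∑ i, X i ω}) :=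
        measureReal_mono fun ω (hω : t ≤ |_|) => le_abs.1 hω
    _ ≤ μ.real {ω | t ≤ ∑ i, X i ω} + μ.real {ω | t ≤ -∑ i, X i ω} := measureReal_union_le _ _
    _ ≤ _ := by
        rw [two_mul]
        exact add_le_add (bernstein_upper_tail hindep hmeas hmean hbdd hK.le ht hV)
          (bernstein_lower_tail hindep hmeas hmean hbdd hK.le ht hV)
end

section
/- Let U, U⁰ be n × r real matrices with orthonormal columns (UᵀU = (U⁰)ᵀU⁰ = I_r). Then inf over orthogonal O ∈ O(r) of ‖U − U⁰O‖ ≤ √2 · ‖UUᵀ − U⁰(U⁰)ᵀ‖, where ‖·‖ denotes operator norm. -/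
/-!
Let `M = U⁰ᵀ U` and let `O` be the orthogonal factor of a polar decomposition of `M`, so that
`P = Oᵀ M` is positive semidefinite and `P² = Mᵀ M`. Expanding gives
`(U - U⁰ O)ᵀ (U - U⁰ O) = 2 (1 - P)` and `1 - P² = Xᵀ X` with `X = (UUᵀ - U⁰U⁰ᵀ) U`, so
`0 ≤ 1 - P² ≤ ‖UUᵀ - U⁰U⁰ᵀ‖²`. From `0 ≤ P` and `P² ≤ 1` the functional calculus gives `P² ≤ P`,
hence `(U - U⁰ O)ᵀ (U - U⁰ O) ≤ 2 (1 - P²) ≤ 2 ‖UUᵀ - U⁰U⁰ᵀ‖²`.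

For singular `M` the polar factor is obtained as a limit point, in the compact unitary group, of
the polar factors `A (Aᴴ A)^(-1/2)` of the invertible matrices `A = M + t • 1` as `t → 0`.
-/

open Matrix Filter Topology
open scoped Matrix.Norms.L2Operator MatrixOrder

section CFC

variable {A : Type*} [TopologicalSpace A] [Ring A] [StarRing A] [PartialOrder A]
  [StarOrderedRing A] [Algebra ℝ A] [ContinuousFunctionalCalculus ℝ A IsSelfAdjoint]
  [NonnegSpectrumClass ℝ A]

lemma CFC.sq_le_self_of_sq_le_one {a : A} (ha : 0 ≤ a) (h : a ^ 2 ≤ 1) : a ^ 2 ≤ a := by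
  have hspec := (StarOrderedRing.nonneg_iff_spectrum_nonneg (R := ℝ) a).mp ha
  rw [← cfc_pow_id (R := ℝ) a 2, cfc_le_one_iff (fun x => x ^ 2) a] at h
  nth_rw 2 [← cfc_id' ℝ a]
  rw [← cfc_pow_id (R := ℝ) a 2, cfc_le_iff (fun x => x ^ 2) (fun x => x) a]
  intro x hx
  nlinarith [hspec x hx, h x hx]

end CFC

lemma EuclideanSpace.real_norm_sq_eq_dotProduct {n : Type*} [Fintype n]
    (x : EuclideanSpace ℝ n) : ‖x‖ ^ 2 = x.ofLp ⬝ᵥ x.ofLp := by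
  rw [← real_inner_self_eq_norm_sq, EuclideanSpace.inner_eq_star_dotProduct, star_trivial]

namespace Matrix

section Polar

open scoped ComplexOrder

variable {n 𝕜 : Type*} [Fintype n] [DecidableEq n] [RCLike 𝕜]

lemma isCompact_unitaryGroup : IsCompact (unitaryGroup n 𝕜 : Set (Matrix n n 𝕜)) := by
  have hbox : IsCompact (Set.univ.pi fun _ : n => Set.univ.pi fun _ : n =>
      Metric.closedBall (0 : 𝕜) 1) :=
    isCompact_univ_pi fun _ => isCompact_univ_pi fun _ => isCompact_closedBall 0 1
  refine hbox.of_isClosed_subset (isClosed_unitary (R := Matrix n n 𝕜)) fun O hO => ?_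
  simpa using entry_norm_bound_of_unitary hO

omit [DecidableEq n] in
lemma isClosed_setOf_posSemidef : IsClosed {A : Matrix n n 𝕜 | A.PosSemidef} := by
  simp only [posSemidef_iff_dotProduct_mulVec, Set.ofPred_and, Set.ofPred_forall]
  refine .inter (isClosed_eq (by fun_prop) continuous_id) (isClosed_iInter fun x => ?_)
  exact isClosed_le continuous_const (by fun_prop)

lemma exists_seq_tendsto_zero_isUnit_add_smul_one (A : Matrix n n 𝕜) :
    ∃ t : ℕ → ℝ, Tendsto t atTop (𝓝 0) ∧ ∀ k, IsUnit (A + t k • 1) := by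
  have hfin : {t : ℝ | -t ∈ spectrum ℝ A}.Finite :=
    A.finite_real_spectrum.preimage neg_injective.injOn
  have (k : ℕ) : ∃ t ∈ Set.Ioo (0 : ℝ) (1 / (k + 1)), t ∉ {t : ℝ | -t ∈ spectrum ℝ A} :=
    (Set.Ioo_infinite (by positivity)).exists_notMem_finite hfin
  choose t ht hunit using this
  refine ⟨t, ?_, fun k => ?_⟩
  · exact tendsto_of_tendsto_of_tendsto_of_le_of_le tendsto_const_nhds
      tendsto_one_div_add_atTop_nhds_zero_nat (fun k => (ht k).1.le) fun k => (ht k).2.le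
  · simpa [Algebra.algebraMap_eq_smul_one, add_comm] using
      (spectrum.notMem_iff.mp (hunit k)).neg

lemma exists_mem_unitaryGroup_posSemidef_conjTranspose_mul_of_isUnit {A : Matrix n n 𝕜}
    (hA : IsUnit A) : ∃ U ∈ unitaryGroup n 𝕜, (Uᴴ * A).PosSemidef := by
  set S := CFC.sqrt (Aᴴ * A)
  have hSS : S * S = Aᴴ * A :=
    CFC.sqrt_mul_sqrt_self _ (posSemidef_conjTranspose_mul_self A).nonneg
  have hS : S.PosSemidef := (CFC.sqrt_nonneg _).posSemidef
  have hSdet : IsUnit S.det := by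
    rw [← isUnit_iff_isUnit_det]
    exact isUnit_of_mul_isUnit_left (hSS ▸ hA.star.mul hA)
  have hUA : (A * S⁻¹)ᴴ * A = S := by
    rw [conjTranspose_mul, conjTranspose_nonsing_inv, hS.isHermitian.eq, Matrix.mul_assoc, ← hSS,
      ← Matrix.mul_assoc, nonsing_inv_mul _ hSdet, Matrix.one_mul]
  refine ⟨A * S⁻¹, ?_, by rwa [hUA]⟩
  rw [mem_unitaryGroup_iff', star_eq_conjTranspose, ← Matrix.mul_assoc, hUA,
    mul_nonsing_inv _ hSdet]

theorem exists_mem_unitaryGroup_posSemidef_conjTranspose_mul (A : Matrix n n 𝕜) :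
    ∃ U ∈ unitaryGroup n 𝕜, (Uᴴ * A).PosSemidef := by
  obtain ⟨t, ht, hunit⟩ := exists_seq_tendsto_zero_isUnit_add_smul_one A
  choose U hU hpsd using fun k =>
    exists_mem_unitaryGroup_posSemidef_conjTranspose_mul_of_isUnit (hunit k)
  obtain ⟨U₀, hU₀, φ, hφ, hUφ⟩ := isCompact_unitaryGroup.tendsto_subseq hU
  have hA : Tendsto (fun k => A + t (φ k) • (1 : Matrix n n 𝕜)) atTop (𝓝 A) := by
    simpa using tendsto_const_nhds.add
      ((ht.comp hφ.tendsto_atTop).smul_const (1 : Matrix n n 𝕜))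
  have hUH : Tendsto (fun k => (U (φ k))ᴴ) atTop (𝓝 U₀ᴴ) :=
    (continuous_id.matrix_conjTranspose.tendsto U₀).comp hUφ
  exact ⟨U₀, hU₀, isClosed_setOf_posSemidef.mem_of_tendsto (hUH.mul hA)
    (Eventually.of_forall fun k => hpsd (φ k))⟩

end Polar

variable {m n : Type*} [Fintype m] [Fintype n] [DecidableEq n]

lemma transpose_mul_self_le_smul_one_iff (B : Matrix m n ℝ) (c : ℝ) :
    Bᵀ * B ≤ c • 1 ↔ ∀ x, (B *ᵥ x) ⬝ᵥ (B *ᵥ x) ≤ c * (x ⬝ᵥ x) := by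
  have hsymm : (c • 1 - Bᵀ * B).IsHermitian := by
    simp [IsHermitian, conjTranspose_eq_transpose_of_trivial, transpose_sub, transpose_mul]
  rw [le_iff, posSemidef_iff_dotProduct_mulVec, and_iff_right hsymm]
  simp only [star_trivial, sub_mulVec, smul_mulVec, one_mulVec, dotProduct_sub, dotProduct_smul,
    smul_eq_mul, sub_nonneg, ← mulVec_mulVec, dotProduct_mulVec _ Bᵀ, vecMul_transpose]

theorem transpose_mul_self_le_sq_smul_one_iff [DecidableEq m] (B : Matrix m n ℝ) {c : ℝ}
    (hc : 0 ≤ c) : Bᵀ * B ≤ c ^ 2 • 1 ↔ ‖B‖ ≤ c := by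
  rw [transpose_mul_self_le_smul_one_iff, l2_opNorm_def, ContinuousLinearMap.opNorm_le_iff hc,
    (WithLp.equiv 2 (n → ℝ)).symm.forall_congr_left]
  refine forall_congr' fun x => ?_
  rw [← pow_le_pow_iff_left₀ (norm_nonneg _) (by positivity) two_ne_zero, mul_pow,
    EuclideanSpace.real_norm_sq_eq_dotProduct, EuclideanSpace.real_norm_sq_eq_dotProduct]
  rfl

omit [Fintype n] in
lemma transpose_sub_mul_sub_of_orthonormal {V W : Matrix m n ℝ} (hV : Vᵀ * V = 1)
    (hW : Wᵀ * W = 1) : (V - W)ᵀ * (V - W) = 2 • 1 - (Wᵀ * V + (Wᵀ * V)ᵀ) := by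
  simp only [transpose_sub, transpose_mul, transpose_transpose, Matrix.sub_mul, Matrix.mul_sub,
    hV, hW]
  abel

lemma one_sub_transpose_mul_self_of_orthonormal {V W : Matrix m n ℝ} (hV : Vᵀ * V = 1)
    (hW : Wᵀ * W = 1) :
    1 - (Wᵀ * V)ᵀ * (Wᵀ * V) = ((V * Vᵀ - W * Wᵀ) * V)ᵀ * ((V * Vᵀ - W * Wᵀ) * V) := by
  have hX : (V * Vᵀ - W * Wᵀ) * V = V - W * (Wᵀ * V) := by
    rw [Matrix.sub_mul, Matrix.mul_assoc, hV, Matrix.mul_one, Matrix.mul_assoc]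
  simp only [hX, transpose_sub, transpose_mul, transpose_transpose, Matrix.sub_mul,
    Matrix.mul_sub, hV, Matrix.mul_assoc]
  simp only [← Matrix.mul_assoc Wᵀ W, hW, Matrix.one_mul]
  abel

theorem norm_sub_le_sqrt_two_mul_norm_sub_of_posSemidef [DecidableEq m] {V W : Matrix m n ℝ}
    (hV : Vᵀ * V = 1) (hW : Wᵀ * W = 1) (hP : (Wᵀ * V).PosSemidef) :
    ‖V - W‖ ≤ Real.sqrt 2 * ‖V * Vᵀ - W * Wᵀ‖ := by
  set P := Wᵀ * V
  set Δ := V * Vᵀ - W * Wᵀ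
  set X := Δ * V
  have hPT : Pᵀ = P := by simpa using hP.isHermitian.eq
  have hPX : 1 - P ^ 2 = Xᵀ * X := by
    rw [sq, ← one_sub_transpose_mul_self_of_orthonormal hV hW, hPT]
  have hX : ‖X‖ ≤ ‖Δ‖ :=
    (l2_opNorm_mul Δ V).trans <| mul_le_of_le_one_right (norm_nonneg _) <|
      (transpose_mul_self_le_sq_smul_one_iff V zero_le_one).mp (by simp [hV])
  refine (transpose_mul_self_le_sq_smul_one_iff _ (by positivity)).mp ?_
  calc (V - W)ᵀ * (V - W) = (2 : ℝ) • (1 - P) := by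
        rw [transpose_sub_mul_sub_of_orthonormal hV hW, hPT, two_smul, two_smul]; abel
    _ ≤ (2 : ℝ) • (1 - P ^ 2) := by
      refine smul_le_smul_of_nonneg_left (sub_le_sub_left ?_ _) zero_le_two
      exact CFC.sq_le_self_of_sq_le_one hP.nonneg
        (sub_nonneg.mp (hPX ▸ (posSemidef_conjTranspose_mul_self X).nonneg))
    _ ≤ (2 : ℝ) • ‖Δ‖ ^ 2 • 1 := by
      rw [hPX]
      exact smul_le_smul_of_nonneg_left
        ((transpose_mul_self_le_sq_smul_one_iff X (norm_nonneg _)).mpr hX) zero_le_two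
    _ = (Real.sqrt 2 * ‖Δ‖) ^ 2 • 1 := by
      rw [smul_smul, mul_pow, Real.sq_sqrt zero_le_two]

end Matrix

/-- Procrustes bound: for `U, U⁰ ∈ ℝ^{n×r}` with orthonormal columns,
`inf_{O ∈ O(r)} ‖U − U⁰O‖ ≤ √2 ‖UUᵀ − U⁰(U⁰)ᵀ‖`, where `‖·‖` is the `ℓ²` operator norm. -/
theorem procrustes_le_projection_distance
    {n r : ℕ} (U U0 : Matrix (Fin n) (Fin r) ℝ)
    (hU : Uᵀ * U = 1) (hU0 : U0ᵀ * U0 = 1) :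
    ⨅ O : Matrix.orthogonalGroup (Fin r) ℝ,
        ‖U - U0 * (O : Matrix (Fin r) (Fin r) ℝ)‖
      ≤ Real.sqrt 2 * ‖U * Uᵀ - U0 * U0ᵀ‖ := by
  obtain ⟨O, hO, hP⟩ := exists_mem_unitaryGroup_posSemidef_conjTranspose_mul (U0ᵀ * U)
  rw [conjTranspose_eq_transpose_of_trivial] at hP
  have hW : (U0 * O)ᵀ * (U0 * O) = 1 := by
    rw [transpose_mul, Matrix.mul_assoc, ← Matrix.mul_assoc U0ᵀ, hU0, Matrix.one_mul,
      (mem_orthogonalGroup_iff' _ _).mp hO]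
  have hWW : (U0 * O) * (U0 * O)ᵀ = U0 * U0ᵀ := by
    rw [transpose_mul, Matrix.mul_assoc, ← Matrix.mul_assoc O,
      (mem_orthogonalGroup_iff _ _).mp hO, Matrix.one_mul]
  have hWU : (U0 * O)ᵀ * U = Oᵀ * (U0ᵀ * U) := by rw [transpose_mul, Matrix.mul_assoc]
  calc ⨅ O : orthogonalGroup (Fin r) ℝ, ‖U - U0 * (O : Matrix (Fin r) (Fin r) ℝ)‖
      ≤ ‖U - U0 * O‖ := ciInf_le ⟨0, Set.forall_mem_range.2 fun _ => norm_nonneg _⟩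
        (⟨O, hO⟩ : orthogonalGroup (Fin r) ℝ)
    _ ≤ Real.sqrt 2 * ‖U * Uᵀ - U0 * U0ᵀ‖ := by
      simpa only [hWW] using norm_sub_le_sqrt_two_mul_norm_sub_of_posSemidef hU hW (hWU ▸ hP)
end

section
/- Let H be a Hilbert space, let {φ_i}_{i∈I} and {φ̂_i}_{i∈I} be two finite orthonormal systems with |I| = m, and write G = (⟨φ_j, φ̂_k⟩)_{j,k∈I} ∈ ℝ^{m×m} with singular value decomposition G = AΣBᵀ. Let P̂ = ∑_{i∈I} φ̂_i φ̂_i* be the projection onto span{φ̂_i}. Then the smallest singular value σ_min of G satisfies σ_min² ≥ 1 − ‖(id − P̂)P‖², where P = ∑_{i∈I} φ_i φ_i*. -/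
/-! Since `G` is square, `Gᵀ` has a unit vector `y` with `‖Gᵀ y‖ ≤ ‖G x‖`: a kernel vector of
`Gᵀ` if `G` is singular, and otherwise one on which `(Gᵀ)⁻¹` attains its norm
`‖G⁻¹‖ ≥ 1 / ‖G x‖`. The unit vector `u = ∑ yⱼ φⱼ` satisfies `P u = u` and has coordinates
`Gᵀ y` along the `ψₖ`, so Bessel's identity gives `‖(1 - Q) P u‖² = 1 - ‖Gᵀ y‖²`, and the left
side is at most `‖(1 - Q) P‖²`. -/

open scoped RealInnerProductSpace
open ContinuousLinearMap (adjoint)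

namespace ContinuousLinearMap

theorem exists_norm_eq_one_apply_eq_opNorm {E F : Type*} [NormedAddCommGroup E] [NormedSpace ℝ E]
    [FiniteDimensional ℝ E] [Nontrivial E] [NormedAddCommGroup F] [NormedSpace ℝ F]
    (T : E →L[ℝ] F) : ∃ z, ‖z‖ = 1 ∧ ‖T z‖ = ‖T‖ := by
  have hK : IsCompact ((fun z ↦ ‖T z‖) '' Metric.sphere 0 1) :=
    (isCompact_sphere 0 1).image (by fun_prop)
  obtain ⟨z, hz, hTz⟩ := hK.sSup_mem ((NormedSpace.sphere_nonempty.mpr zero_le_one).image _)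
  rw [T.sSup_sphere_eq_norm] at hTz
  exact ⟨z, mem_sphere_zero_iff_norm.mp hz, hTz⟩

theorem exists_norm_eq_one_adjoint_apply_eq_zero {E F : Type*} [NormedAddCommGroup E]
    [InnerProductSpace ℝ E] [CompleteSpace E] [NormedAddCommGroup F] [InnerProductSpace ℝ F]
    [FiniteDimensional ℝ F] {T : E →L[ℝ] F} (hT : ¬Function.Surjective T) :
    ∃ y, ‖y‖ = 1 ∧ adjoint T y = 0 := by
  have hrange : (T.range)ᗮ ≠ ⊥ := by
    rw [Ne, Submodule.orthogonal_eq_bot_iff, LinearMap.range_eq_top]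
    exact hT
  obtain ⟨y, hy, hy0⟩ := Submodule.exists_mem_ne_zero_of_ne_bot hrange
  rw [T.orthogonal_range] at hy
  have hTy : adjoint T y = 0 := hy
  exact ⟨‖y‖⁻¹ • y, norm_smul_inv_norm hy0, by simp [hTy]⟩

end ContinuousLinearMap

namespace ContinuousLinearEquiv

variable {E F : Type*} [NormedAddCommGroup E] [InnerProductSpace ℝ E]
  [NormedAddCommGroup F] [InnerProductSpace ℝ F] [FiniteDimensional ℝ E] [CompleteSpace F]

theorem exists_norm_eq_one_adjoint_apply_le (e : E ≃L[ℝ] F) {x : E} (hx : ‖x‖ = 1) :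
    ∃ y, ‖y‖ = 1 ∧ ‖adjoint (e : E →L[ℝ] F) y‖ ≤ ‖e x‖ := by
  have : Nontrivial E := nontrivial_of_ne x 0 (by rintro rfl; simp at hx)
  set S : F →L[ℝ] E := e.symm.toContinuousLinearMap
  have hSe : 1 ≤ ‖S‖ * ‖e x‖ :=
    calc 1 = ‖S (e x)‖ := by simp [S, hx]
      _ ≤ ‖S‖ * ‖e x‖ := S.le_opNorm _
  have hS : 0 < ‖S‖ := (norm_nonneg S).lt_of_ne fun h ↦ by
    rw [← h, zero_mul] at hSe
    exact zero_lt_one.not_ge hSe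
  obtain ⟨z, hz, hSz⟩ := (adjoint S).exists_norm_eq_one_apply_eq_opNorm
  have hTS : adjoint (e : E →L[ℝ] F) (adjoint S z) = z := by
    rw [← ContinuousLinearMap.comp_apply, ← ContinuousLinearMap.adjoint_comp]
    simp [S, ContinuousLinearMap.adjoint_id]
  refine ⟨‖S‖⁻¹ • adjoint S z, ?_, ?_⟩
  · rw [norm_smul, hSz, ContinuousLinearMap.adjoint.norm_map, norm_inv, norm_norm,
      inv_mul_cancel₀ hS.ne']
  · rw [ContinuousLinearMap.map_smul, hTS, norm_smul, hz, mul_one, norm_inv, norm_norm,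
      inv_le_iff_one_le_mul₀ hS]
    rwa [mul_comm]

end ContinuousLinearEquiv

theorem ContinuousLinearMap.exists_norm_eq_one_adjoint_apply_le {E : Type*} [NormedAddCommGroup E]
    [InnerProductSpace ℝ E] [FiniteDimensional ℝ E] (T : E →L[ℝ] E) {x : E} (hx : ‖x‖ = 1) :
    ∃ y, ‖y‖ = 1 ∧ ‖adjoint T y‖ ≤ ‖T x‖ := by
  by_cases hT : Function.Surjective T
  · have hinj : Function.Injective T := LinearMap.injective_iff_surjective.mpr hT
    exact (LinearEquiv.ofBijective (T : E →ₗ[ℝ] E) ⟨hinj, hT⟩).toContinuousLinearEquiv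
      |>.exists_norm_eq_one_adjoint_apply_le hx
  · obtain ⟨y, hy, hTy⟩ := exists_norm_eq_one_adjoint_apply_eq_zero hT
    exact ⟨y, hy, by simp [hTy]⟩

namespace Matrix

theorem exists_sum_sq_eq_one_transpose_mulVec_le {n : Type*} [Fintype n] [DecidableEq n]
    (A : Matrix n n ℝ) {x : n → ℝ} (hx : ∑ i, x i ^ 2 = 1) :
    ∃ y : n → ℝ, ∑ i, y i ^ 2 = 1 ∧ ∑ i, (Aᵀ *ᵥ y) i ^ 2 ≤ ∑ i, (A *ᵥ x) i ^ 2 := by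
  have hnorm (v : n → ℝ) : ‖WithLp.toLp 2 v‖ ^ 2 = ∑ i, v i ^ 2 :=
    EuclideanSpace.real_norm_sq_eq _
  have hadj : adjoint (toEuclideanCLM (𝕜 := ℝ) A) = toEuclideanCLM (𝕜 := ℝ) Aᵀ := by
    rw [← ContinuousLinearMap.star_eq_adjoint, ← map_star, star_eq_conjTranspose,
      conjTranspose_eq_transpose_of_trivial]
  obtain ⟨y, hy, hAy⟩ := (toEuclideanCLM (𝕜 := ℝ) A).exists_norm_eq_one_adjoint_apply_le
    (x := WithLp.toLp 2 x)
    (by rw [← pow_eq_one_iff_of_nonneg (norm_nonneg _) two_ne_zero, hnorm, hx])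
  refine ⟨y.ofLp, by rw [← hnorm, WithLp.toLp_ofLp, hy, one_pow], ?_⟩
  simpa [hadj, EuclideanSpace.real_norm_sq_eq] using pow_le_pow_left₀ (norm_nonneg _) hAy 2

end Matrix

theorem ContinuousLinearMap.sum_innerSL_smulRight_apply {𝕜 H ι : Type*} [RCLike 𝕜]
    [NormedAddCommGroup H] [InnerProductSpace 𝕜 H] [Fintype ι] (v : ι → H) (w : H) :
    (∑ i, (innerSL 𝕜 (v i)).smulRight (v i)) w = ∑ i, inner 𝕜 (v i) w • v i := by
  simp only [sum_apply, smulRight_apply, innerSL_apply_apply]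

namespace Orthonormal

variable {H ι : Type*} [NormedAddCommGroup H] [InnerProductSpace ℝ H] [Fintype ι] {v : ι → H}

theorem norm_sum_smul_sq (hv : Orthonormal ℝ v) (c : ι → ℝ) :
    ‖∑ i, c i • v i‖ ^ 2 = ∑ i, c i ^ 2 := by
  rw [← real_inner_self_eq_norm_sq, hv.inner_sum]
  simp [sq]

theorem norm_sub_sum_inner_smul_sq (hv : Orthonormal ℝ v) (w : H) :
    ‖w - ∑ i, ⟪v i, w⟫ • v i‖ ^ 2 = ‖w‖ ^ 2 - ∑ i, ⟪v i, w⟫ ^ 2 := by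
  have hw : ⟪w, ∑ i, ⟪v i, w⟫ • v i⟫ = ∑ i, ⟪v i, w⟫ ^ 2 := by
    simp [inner_sum, real_inner_smul_right, real_inner_comm, sq]
  rw [norm_sub_sq_real, hw, hv.norm_sum_smul_sq]
  ring

theorem sum_innerSL_smulRight_apply_sum_smul {𝕜 E : Type*} [RCLike 𝕜] [NormedAddCommGroup E]
    [InnerProductSpace 𝕜 E] {v : ι → E} (hv : Orthonormal 𝕜 v) (c : ι → 𝕜) :
    (∑ i, (innerSL 𝕜 (v i)).smulRight (v i)) (∑ j, c j • v j) = ∑ j, c j • v j := by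
  simp only [ContinuousLinearMap.sum_innerSL_smulRight_apply, hv.inner_right_fintype]

end Orthonormal

theorem gram_smallest_singular_value_bound_general
    {H : Type*} [NormedAddCommGroup H] [InnerProductSpace ℝ H]
    {m : ℕ} (φ ψ : Fin m → H)
    (hφ : Orthonormal ℝ φ) (hψ : Orthonormal ℝ ψ)
    (G : Matrix (Fin m) (Fin m) ℝ)
    (hG : ∀ j k, G j k = ⟪φ j, ψ k⟫)
    (P Q : H →L[ℝ] H)
    (hP : P = ∑ i, (innerSL ℝ (φ i)).smulRight (φ i))
    (hQ : Q = ∑ i, (innerSL ℝ (ψ i)).smulRight (ψ i))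
    (x : Fin m → ℝ) (hx : ∑ i, x i ^ 2 = 1) :
    1 - ‖((1 : H →L[ℝ] H) - Q) * P‖ ^ 2 ≤ ∑ j, (G.mulVec x j) ^ 2 := by
  obtain ⟨y, hy, hGy⟩ := G.exists_sum_sq_eq_one_transpose_mulVec_le hx
  set u := ∑ j, y j • φ j
  have hu : ‖u‖ = 1 := by
    rw [← pow_eq_one_iff_of_nonneg (norm_nonneg _) two_ne_zero, hφ.norm_sum_smul_sq, hy]
  have hψu (k : Fin m) : ⟪ψ k, u⟫ = (G.transpose.mulVec y) k := by
    simp [u, inner_sum, real_inner_smul_right, Matrix.mulVec, dotProduct, hG, real_inner_comm,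
      mul_comm]
  have happ : (((1 : H →L[ℝ] H) - Q) * P) u = u - ∑ k, ⟪ψ k, u⟫ • ψ k := by
    rw [mul_apply_eq_comp, hP, hφ.sum_innerSL_smulRight_apply_sum_smul, hQ,
      sub_apply, one_apply_eq_self, ContinuousLinearMap.sum_innerSL_smulRight_apply]
  calc 1 - ‖((1 : H →L[ℝ] H) - Q) * P‖ ^ 2 ≤ 1 - ‖(((1 : H →L[ℝ] H) - Q) * P) u‖ ^ 2 := by
        gcongr
        exact ContinuousLinearMap.unit_le_opNorm _ _ hu.le
    _ = ∑ k, ⟪ψ k, u⟫ ^ 2 := by rw [happ, hψ.norm_sub_sum_inner_smul_sq, hu]; ring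
    _ ≤ ∑ j, (G.mulVec x j) ^ 2 := by simpa only [hψu] using hGy

/-- Let `φ` and `ψ` be two orthonormal systems of size `m` in a real Hilbert space `H`,
`G = (⟪φ_j, ψ_k⟫)_{j,k}` the Gram matrix, `P` and `Q` the orthogonal projections onto their
spans. Then the smallest singular value `σ_min` of `G` satisfies
`σ_min² ≥ 1 − ‖(id − Q)P‖²` (stated as: `‖Gx‖² ≥ 1 − ‖(id − Q)P‖²` for every unit `x`). -/
theorem gram_smallest_singular_value_bound
    {H : Type*} [NormedAddCommGroup H] [InnerProductSpace ℝ H] [CompleteSpace H]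
    {m : ℕ} (φ ψ : Fin m → H)
    (hφ : Orthonormal ℝ φ) (hψ : Orthonormal ℝ ψ)
    (G : Matrix (Fin m) (Fin m) ℝ)
    (hG : ∀ j k, G j k = ⟪φ j, ψ k⟫)
    (P Q : H →L[ℝ] H)
    (hP : P = ∑ i, (innerSL ℝ (φ i)).smulRight (φ i))
    (hQ : Q = ∑ i, (innerSL ℝ (ψ i)).smulRight (ψ i))
    (x : Fin m → ℝ) (hx : ∑ i, x i ^ 2 = 1) :
    1 - ‖((1 : H →L[ℝ] H) - Q) * P‖ ^ 2 ≤ ∑ j, (G.mulVec x j) ^ 2 :=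
  gram_smallest_singular_value_bound_general φ ψ hφ hψ G hG P Q hP hQ x hx
end
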